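/- For every positive long root α ∈ Φ_lg ∩ Φ⁺, one has x_{−α} = s_α x_α, and the lengths add: l(x_{−α}) = l(s_α x_α) = l(s_α) + l(x_α). -/

import Mathlib

open scoped RealInnerProductSpace Classical

noncomputable section

variable {V : Type} [NormedAddCommGroup V] [InnerProductSpace ℝ V] [FiniteDimensional ℝ V]

/-- The orthogonal reflection of `V` in the hyperplane orthogonal to `α`
(the reflection `s_α` when `α` is a root). -/
def sref (α : V) : V ≃ₗᵢ[ℝ] V := Submodule.reflection (Submodule.span ℝ {α})ᗮ

/-- The pairing `⟨β, γ∨⟩ = 2(β|γ)/(γ|γ)` of a vector with the coroot of `γ`. -/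
def cpair (β γ : V) : ℝ := 2 * ⟪β, γ⟫ / ⟪γ, γ⟫

/-- An irreducible reduced (crystallographic) root system in the real inner product
space `V`, the inner product being invariant under the Weyl group (automatic, since
reflections are isometries), normalized so that the shortest roots have squared length `1`. -/
structure NRootSystem (V : Type) [NormedAddCommGroup V] [InnerProductSpace ℝ V]
    [FiniteDimensional ℝ V] where
  Φ : Finset V
  nonempty : Φ.Nonempty
  zero_not_mem : (0 : V) ∉ Φ
  span_eq_top : Submodule.span ℝ (Φ : Set V) = ⊤
  reduced : ∀ α ∈ Φ, ∀ t : ℝ, t • α ∈ Φ → t = 1 ∨ t = -1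
  pairing_int : ∀ α ∈ Φ, ∀ β ∈ Φ, ∃ n : ℤ, 2 * ⟪β, α⟫ = n * ⟪α, α⟫
  reflect_mem : ∀ α ∈ Φ, ∀ β ∈ Φ, sref α β ∈ Φ
  irreducible : ∀ S : Finset V, S ⊆ Φ → S.Nonempty → (Φ \ S).Nonempty →
    ∃ α ∈ S, ∃ β ∈ Φ \ S, ⟪α, β⟫ ≠ 0
  norm_one_le : ∀ α ∈ Φ, 1 ≤ ⟪α, α⟫
  exists_norm_one : ∃ α ∈ Φ, ⟪α, α⟫ = 1

namespace NRootSystem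

variable (R : NRootSystem V)

/-- `r`, the maximal squared length of a root. -/
def r : ℝ := R.Φ.sup' R.nonempty fun α => ⟪α, α⟫

/-- long roots -/
def IsLong (α : V) : Prop := α ∈ R.Φ ∧ ⟪α, α⟫ = R.r

/-- short roots -/
def IsShort (α : V) : Prop := α ∈ R.Φ ∧ ⟪α, α⟫ < R.r

/-- The Weyl group `W`, generated by the reflections in the roots. -/
def Weyl : Subgroup (V ≃ₗᵢ[ℝ] V) := Subgroup.closure (sref '' (R.Φ : Set V))

end NRootSystem

/-- The standard parabolic subgroup `W_I` generated by the reflections in `I ⊆ Δ`. -/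
def WeylP (I : Finset V) : Subgroup (V ≃ₗᵢ[ℝ] V) := Subgroup.closure (sref '' (I : Set V))

/-- A base (set of simple roots) `Δ` of the root system, together with the
integral coordinates `coeff γ α` of each root `γ` in the basis `Δ`; every root is a
nonnegative or a nonpositive integral combination of the simple roots. -/
structure Base {V : Type} [NormedAddCommGroup V] [InnerProductSpace ℝ V]
    [FiniteDimensional ℝ V] (R : NRootSystem V) where
  Δ : Finset V
  subset : Δ ⊆ R.Φ
  indep : LinearIndependent ℝ (fun a : {x : V // x ∈ Δ} => (a : V))
  coeff : V → V → ℤ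
  coeff_spec : ∀ γ ∈ R.Φ, γ = ∑ α ∈ Δ, (coeff γ α : ℝ) • α
  coeff_sign : ∀ γ ∈ R.Φ, (∀ α ∈ Δ, 0 ≤ coeff γ α) ∨ (∀ α ∈ Δ, coeff γ α ≤ 0)

namespace Base

variable {R : NRootSystem V} (B : Base R)

/-- positive roots -/
def IsPos (γ : V) : Prop := γ ∈ R.Φ ∧ ∀ α ∈ B.Δ, 0 ≤ B.coeff γ α

/-- negative roots -/
def IsNeg (γ : V) : Prop := γ ∈ R.Φ ∧ ∀ α ∈ B.Δ, B.coeff γ α ≤ 0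

/-- the height of a root -/
def ht (γ : V) : ℤ := ∑ α ∈ B.Δ, B.coeff γ α

/-- the dual height `ht∨ γ = ht (γ∨)`: the height of the coroot `γ∨ = 2γ/(γ|γ)`
with respect to the basis of simple coroots `α∨ = 2α/(α|α)`, `α ∈ Δ`. -/
def htv (γ : V) : ℝ := ∑ α ∈ B.Δ, (B.coeff γ α : ℝ) * ⟪α, α⟫ / ⟪γ, γ⟫

/-- The length of `w`: the minimal length of an expression of `w` as a product of
simple reflections. -/
def len (w : V ≃ₗᵢ[ℝ] V) : ℕ :=
  sInf {n | ∃ g : Fin n → V, (∀ i, g i ∈ B.Δ) ∧ w = (List.ofFn fun i => sref (g i)).prod}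

/-- `w` is the longest element of the subgroup `H`. -/
def IsLongest (H : Subgroup (V ≃ₗᵢ[ℝ] V)) (w : V ≃ₗᵢ[ℝ] V) : Prop :=
  w ∈ H ∧ ∀ u ∈ H, B.len u ≤ B.len w

/-- `X_I = {w ∈ W | w(Φ_I⁺) ⊆ Φ⁺}`, the set of minimal length coset
representatives of `W/W_I`. -/
def XI (I : Finset V) : Set (V ≃ₗᵢ[ℝ] V) :=
  {w | w ∈ R.Weyl ∧
    ∀ γ, γ ∈ R.Φ → γ ∈ Submodule.span ℝ (I : Set V) → B.IsPos γ → B.IsPos (w γ)}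

/-- `h` is the highest root. -/
def IsHighest (h : V) : Prop :=
  h ∈ R.Φ ∧ ∀ γ ∈ R.Φ, ∀ α ∈ B.Δ, B.coeff γ α ≤ B.coeff h α

/-- `Ĩ = {α ∈ Δ | (h|α) = 0}`, the simple roots orthogonal to the highest root `h`. -/
def Itil (h : V) : Finset V := B.Δ.filter fun α => ⟪h, α⟫ = 0

/-- The level `L(α)` of a long root `α`, where `h` is the highest root:
`L(α) = ht∨(h) − ht∨(α)` if `α > 0` and `L(α) = ht∨(h) − ht∨(α) − 1` if `α < 0`. -/
def level (h α : V) : ℝ :=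
  if B.IsPos α then B.htv h - B.htv α else B.htv h - B.htv α - 1

/-- The elementary step relation `β →_γ α` on long roots (`γ` a positive root):
`α = s_γ(β)` and `L(α) = L(β) + 1`. -/
def Step (h γ β α : V) : Prop :=
  R.IsLong β ∧ R.IsLong α ∧ B.IsPos γ ∧ α = sref γ β ∧
    B.level h α = B.level h β + 1

/-- `g` is the sequence of positive roots of a path
`β = β₀ →_{g 0} β₁ →_{g 1} ⋯ →_{g (n-1)} β_n = α` from `β` to `α`. -/
def IsPathWord (h : V) {n : ℕ} (g : Fin n → V) (β α : V) : Prop :=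
  ∃ c : Fin (n + 1) → V, c 0 = β ∧ c (Fin.last n) = α ∧
    ∀ i : Fin n, B.Step h (g i) (c i.castSucc) (c i.succ)

/-- a path all of whose steps use simple roots -/
def IsSimplePathWord (h : V) {n : ℕ} (g : Fin n → V) (β α : V) : Prop :=
  B.IsPathWord h g β α ∧ ∀ i, g i ∈ B.Δ

/-- there is a path from `β` to `α`, i.e. `α ⪯ β` -/
def HasPath (h β α : V) : Prop := ∃ (n : ℕ) (g : Fin n → V), B.IsPathWord h g β α

/-- there is a simple path from `β` to `α` -/
def HasSimplePath (h β α : V) : Prop :=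
  ∃ (n : ℕ) (g : Fin n → V), B.IsSimplePathWord h g β α

/-- The covering relation `w →_γ w'` for the Bruhat order:
`w' = s_γ w` and `l(w') = l(w) + 1`, for a positive root `γ`. -/
def BStep (γ : V) (w w' : V ≃ₗᵢ[ℝ] V) : Prop :=
  B.IsPos γ ∧ w' = sref γ * w ∧ B.len w' = B.len w + 1

/-- The Bruhat order on `W`: the reflexive–transitive closure of the covering
relations. -/
def bruhatLE : (V ≃ₗᵢ[ℝ] V) → (V ≃ₗᵢ[ℝ] V) → Prop :=
  Relation.ReflTransGen fun w w' => ∃ γ, B.BStep γ w w'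

/-- `x` is an element of `W` with `x(β) = α` of the minimal possible length
`|L(α) − L(β)|` (this is the element `x_{αβ}` when it exists). -/
def MinTake (h β α : V) (x : V ≃ₗᵢ[ℝ] V) : Prop :=
  x ∈ R.Weyl ∧ x β = α ∧ (B.len x : ℝ) = |B.level h α - B.level h β|

/-- `g` is a reduced expression of `x` as a product of simple reflections. -/
def IsReducedWord {n : ℕ} (g : Fin n → V) (x : V ≃ₗᵢ[ℝ] V) : Prop :=
  (∀ i, g i ∈ B.Δ) ∧ x = (List.ofFn fun i => sref (g i)).prod ∧ n = B.len x

/-- The depth of a positive root `β`: the minimal integer `k` such that there is an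
element `w` of `W` of length `k` with `w(β) < 0`. -/
def depth (β : V) : ℕ := sInf {n | ∃ w ∈ R.Weyl, B.len w = n ∧ B.IsNeg (w β)}

end Base

end

/-!
Since `(α̃|γ) = 0` for the roots `γ` of `Φ_Ĩ`, the reflection `s_α` fixes `x_α(Φ_Ĩ)` pointwise,
so `s_α x_α` again lies in `X_Ĩ`, and it sends `α̃` to `−α`. An element of `X_Ĩ` is determined
by its value at `α̃`: if `y, y' ∈ X_Ĩ` agree there, `w = y⁻¹ y'` fixes `α̃`, and a positive root
`γ` with `w γ < 0` satisfies `0 ≤ (α̃|γ) = (α̃|w γ) ≤ 0`, so `γ` and `−w γ` are positive roots of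
`Φ_Ĩ`, whence `y' γ = y (w γ)` would be both positive and negative. Thus `w` has no inversions
and `w = 1`. For the lengths, `l(w)` is the number of inversions of `w`; every inversion `δ` of
`s_α` has `(δ|α) > 0`, so `(α̃|x_α⁻¹ δ) = (α|δ) > 0` and `x_α⁻¹ δ > 0`: the inversion set of
`s_α x_α` is the disjoint union of that of `x_α` and the image under `x_α⁻¹` of that of `s_α`.
-/

namespace LinearIsometryEquiv

variable {E : Type*} [SeminormedAddCommGroup E] [NormedSpace ℝ E]

theorem mul_apply (u v : E ≃ₗᵢ[ℝ] E) (x : E) : (u * v) x = u (v x) := rfl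

theorem inv_apply_self (u : E ≃ₗᵢ[ℝ] E) (x : E) : u⁻¹ (u x) = x := u.symm_apply_apply x

theorem apply_inv_self (u : E ≃ₗᵢ[ℝ] E) (x : E) : u (u⁻¹ x) = x := u.apply_symm_apply x

end LinearIsometryEquiv

open LinearIsometryEquiv

section Reflection

variable {V : Type} [NormedAddCommGroup V] [InnerProductSpace ℝ V]

theorem sref_apply (α β : V) : sref α β = β - (2 * ⟪α, β⟫ / ⟪α, α⟫) • α := by
  rw [sref, Submodule.reflection_orthogonal_apply, Submodule.reflection_singleton_apply,
    real_inner_self_eq_norm_sq]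
  simp only [RCLike.ofReal_real_eq_id, id_eq]
  match_scalars <;> ring

theorem sref_self (α : V) : sref α α = -α :=
  Submodule.reflection_orthogonalComplement_singleton_eq_neg α

theorem sref_apply_of_inner_eq_zero {α β : V} (h : ⟪α, β⟫ = 0) : sref α β = β := by
  simp [sref_apply, h]

theorem sref_mul_self (α : V) : sref α * sref α = 1 := Submodule.reflection_mul_reflection _

theorem sref_inv (α : V) : (sref α)⁻¹ = sref α :=
  inv_eq_of_mul_eq_one_right (sref_mul_self α)

theorem sref_neg (α : V) : sref (-α) = sref α := by
  simp only [sref, ← Set.neg_singleton, Submodule.span_neg]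

theorem sref_map (w : V ≃ₗᵢ[ℝ] V) (α : V) : sref (w α) = w * sref α * w⁻¹ := by
  ext v
  rw [mul_apply, mul_apply, sref_apply, sref_apply, _root_.map_sub, _root_.map_smul, apply_inv_self,
    ← w.inner_map_map α (w⁻¹ v), apply_inv_self, w.inner_map_map]

end Reflection

variable {V : Type} [NormedAddCommGroup V] [InnerProductSpace ℝ V] [FiniteDimensional ℝ V]

namespace NRootSystem

variable {R : NRootSystem V}

theorem ne_zero_of_mem {γ : V} (hγ : γ ∈ R.Φ) : γ ≠ 0 := fun h => R.zero_not_mem (h ▸ hγ)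

theorem inner_self_pos_of_mem {γ : V} (hγ : γ ∈ R.Φ) : 0 < ⟪γ, γ⟫ :=
  one_pos.trans_le (R.norm_one_le γ hγ)

theorem neg_mem_of_mem {γ : V} (hγ : γ ∈ R.Φ) : -γ ∈ R.Φ := sref_self γ ▸ R.reflect_mem γ hγ γ hγ

theorem exists_sref_apply_eq_sub_zsmul {α β : V} (hα : α ∈ R.Φ) (hβ : β ∈ R.Φ) :
    ∃ n : ℤ, 2 * ⟪α, β⟫ / ⟪α, α⟫ = n ∧ sref α β = β - (n : ℝ) • α := by
  obtain ⟨n, hn⟩ := R.pairing_int α hα β hβ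
  have hpair : 2 * ⟪α, β⟫ / ⟪α, α⟫ = n := by
    rw [real_inner_comm, hn, mul_div_assoc, div_self (inner_self_pos_of_mem hα).ne', mul_one]
  exact ⟨n, hpair, by rw [sref_apply, hpair]⟩

theorem sref_mem_Weyl {α : V} (hα : α ∈ R.Φ) : sref α ∈ R.Weyl :=
  Subgroup.subset_closure ⟨α, hα, rfl⟩

theorem apply_mem_of_mem_Weyl {w : V ≃ₗᵢ[ℝ] V} (hw : w ∈ R.Weyl) {γ : V} (hγ : γ ∈ R.Φ) :
    w γ ∈ R.Φ := by
  induction hw using Subgroup.closure_induction'' generalizing γ with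
  | one => exact hγ
  | mem u hu => obtain ⟨α, hα, rfl⟩ := hu; exact R.reflect_mem α hα γ hγ
  | inv_mem u hu => obtain ⟨α, hα, rfl⟩ := hu; exact sref_inv α ▸ R.reflect_mem α hα γ hγ
  | mul u v _ _ hu hv => exact hu (hv hγ)

end NRootSystem

open NRootSystem

namespace Base

variable {R : NRootSystem V} {B : Base R} {h : V}

variable (B) in
theorem coeff_eq_of_eq_sum {γ : V} (hγ : γ ∈ R.Φ) {c : V → ℤ}
    (h : γ = ∑ a ∈ B.Δ, (c a : ℝ) • a) {a : V} (ha : a ∈ B.Δ) : B.coeff γ a = c a := by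
  have hzero : ∑ b ∈ B.Δ.attach, ((B.coeff γ b : ℝ) - c b) • (b : V) = 0 := by
    rw [Finset.sum_attach B.Δ fun b => ((B.coeff γ b : ℝ) - c b) • b]
    simp only [sub_smul, Finset.sum_sub_distrib, ← h, ← B.coeff_spec γ hγ, sub_self]
  have := linearIndependent_iff'.mp B.indep _ _ hzero ⟨a, ha⟩ (Finset.mem_attach _ _)
  exact_mod_cast sub_eq_zero.mp this

variable (B) in
theorem isPos_or_isNeg {γ : V} (hγ : γ ∈ R.Φ) : B.IsPos γ ∨ B.IsNeg γ :=
  (B.coeff_sign γ hγ).imp (⟨hγ, ·⟩) (⟨hγ, ·⟩)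

theorem IsPos.not_isNeg {γ : V} (hp : B.IsPos γ) : ¬B.IsNeg γ := by
  intro hn
  apply ne_zero_of_mem hp.1
  rw [B.coeff_spec γ hp.1]
  refine Finset.sum_eq_zero fun a ha => ?_
  rw [le_antisymm (hn.2 a ha) (hp.2 a ha), Int.cast_zero, zero_smul]

theorem coeff_sub_zsmul {γ α : V} (hγ : γ ∈ R.Φ) (hα : α ∈ R.Φ) {n : ℤ}
    (hγ' : γ - (n : ℝ) • α ∈ R.Φ) {a : V} (ha : a ∈ B.Δ) :
    B.coeff (γ - (n : ℝ) • α) a = B.coeff γ a - n * B.coeff α a := by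
  refine B.coeff_eq_of_eq_sum hγ' (c := fun b => B.coeff γ b - n * B.coeff α b) ?_ ha
  push_cast
  simp only [sub_smul, Finset.sum_sub_distrib, mul_smul, ← Finset.smul_sum,
    ← B.coeff_spec γ hγ, ← B.coeff_spec α hα]

theorem coeff_neg {γ : V} (hγ : γ ∈ R.Φ) {a : V} (ha : a ∈ B.Δ) :
    B.coeff (-γ) a = -B.coeff γ a := by
  refine B.coeff_eq_of_eq_sum (neg_mem_of_mem hγ) (c := fun b => -B.coeff γ b) ?_ ha
  push_cast
  simp only [neg_smul, Finset.sum_neg_distrib, ← B.coeff_spec γ hγ]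

theorem IsPos.neg {γ : V} (hp : B.IsPos γ) : B.IsNeg (-γ) :=
  ⟨neg_mem_of_mem hp.1, fun a ha => by rw [coeff_neg hp.1 ha]; exact neg_nonpos.mpr (hp.2 a ha)⟩

theorem IsNeg.neg {γ : V} (hn : B.IsNeg γ) : B.IsPos (-γ) :=
  ⟨neg_mem_of_mem hn.1, fun a ha => by rw [coeff_neg hn.1 ha]; exact neg_nonneg.mpr (hn.2 a ha)⟩

theorem coeff_of_mem_Δ {a : V} (ha : a ∈ B.Δ) {b : V} (hb : b ∈ B.Δ) :
    B.coeff a b = if b = a then 1 else 0 := by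
  refine B.coeff_eq_of_eq_sum (B.subset ha) (c := fun b => if b = a then 1 else 0) ?_ hb
  push_cast
  simp [ite_smul, ha]

theorem isPos_of_mem_Δ {a : V} (ha : a ∈ B.Δ) : B.IsPos a :=
  ⟨B.subset ha, fun b hb => by rw [coeff_of_mem_Δ ha hb]; split_ifs <;> simp⟩

theorem exists_coeff_pos_of_ne {a γ : V} (ha : a ∈ B.Δ) (hγ : B.IsPos γ) (hne : γ ≠ a) :
    ∃ b ∈ B.Δ, b ≠ a ∧ 0 < B.coeff γ b := by
  by_contra! hcon
  have hγa : γ = (B.coeff γ a : ℝ) • a := by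
    have hspec := B.coeff_spec γ hγ.1
    rwa [Finset.sum_eq_single_of_mem a ha fun b hb hba => by
      rw [le_antisymm (hcon b hb hba) (hγ.2 b hb), Int.cast_zero, zero_smul]] at hspec
  rcases R.reduced a (B.subset ha) _ (hγa ▸ hγ.1) with h1 | h1
  · exact hne (by rw [hγa, h1, one_smul])
  · have : B.coeff γ a = -1 := by exact_mod_cast h1
    linarith [hγ.2 a ha]

theorem isPos_sref_apply_of_ne {a γ : V} (ha : a ∈ B.Δ) (hγ : B.IsPos γ) (hne : γ ≠ a) :
    B.IsPos (sref a γ) := by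
  obtain ⟨n, -, hform⟩ := exists_sref_apply_eq_sub_zsmul (B.subset ha) hγ.1
  have hmem : sref a γ ∈ R.Φ := R.reflect_mem a (B.subset ha) γ hγ.1
  obtain ⟨b, hb, hba, hbpos⟩ := exists_coeff_pos_of_ne ha hγ hne
  refine (B.isPos_or_isNeg hmem).resolve_right fun hneg => ?_
  have hcoeff := coeff_sub_zsmul hγ.1 (B.subset ha) (hform ▸ hmem) hb
  rw [coeff_of_mem_Δ ha hb, if_neg hba, mul_zero, sub_zero, ← hform] at hcoeff
  linarith [hneg.2 b hb]

theorem inner_pos_of_isNeg_sref_apply {α δ : V} (hα : B.IsPos α) (hδ : B.IsPos δ)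
    (hneg : B.IsNeg (sref α δ)) : 0 < ⟪δ, α⟫ := by
  by_contra! hcon
  obtain ⟨n, hpair, hform⟩ := exists_sref_apply_eq_sub_zsmul hα.1 hδ.1
  have hmem : sref α δ ∈ R.Φ := R.reflect_mem α hα.1 δ hδ.1
  have hn : n ≤ 0 := by
    have : (n : ℝ) ≤ 0 := hpair ▸ div_nonpos_of_nonpos_of_nonneg
      (by rw [real_inner_comm]; linarith) (inner_self_pos_of_mem hα.1).le
    exact_mod_cast this
  refine hδ.not_isNeg ⟨hδ.1, fun b hb => ?_⟩
  have hcoeff := coeff_sub_zsmul hδ.1 hα.1 (hform ▸ hmem) hb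
  rw [← hform] at hcoeff
  nlinarith [hneg.2 b hb, hα.2 b hb]

theorem IsHighest.isPos (hh : B.IsHighest h) : B.IsPos h :=
  ⟨hh.1, fun a ha => zero_le_one.trans <| by
    simpa [coeff_of_mem_Δ ha ha] using hh.2 a (B.subset ha) a ha⟩

theorem IsHighest.inner_nonneg_of_mem_Δ (hh : B.IsHighest h) {a : V} (ha : a ∈ B.Δ) :
    0 ≤ ⟪h, a⟫ := by
  by_contra! hcon
  obtain ⟨n, hpair, hform⟩ := exists_sref_apply_eq_sub_zsmul (B.subset ha) hh.1
  have hmem : sref a h ∈ R.Φ := R.reflect_mem a (B.subset ha) h hh.1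
  have hn : n < 0 := by
    have : (n : ℝ) < 0 := hpair ▸ div_neg_of_neg_of_pos
      (by rw [real_inner_comm]; linarith) (inner_self_pos_of_mem (B.subset ha))
    exact_mod_cast this
  have hcoeff := coeff_sub_zsmul hh.1 (B.subset ha) (hform ▸ hmem) ha
  rw [coeff_of_mem_Δ ha ha, if_pos rfl, mul_one, ← hform] at hcoeff
  linarith [hh.2 _ hmem a ha]

theorem IsHighest.inner_nonneg (hh : B.IsHighest h) {γ : V} (hγ : B.IsPos γ) :
    0 ≤ ⟪h, γ⟫ := by
  rw [B.coeff_spec γ hγ.1, inner_sum]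
  refine Finset.sum_nonneg fun a ha => ?_
  rw [real_inner_smul_right]
  exact mul_nonneg (by exact_mod_cast hγ.2 a ha) (hh.inner_nonneg_of_mem_Δ ha)

theorem IsHighest.inner_nonpos (hh : B.IsHighest h) {γ : V} (hγ : B.IsNeg γ) :
    ⟪h, γ⟫ ≤ 0 := by
  simpa [inner_neg_right] using hh.inner_nonneg hγ.neg

theorem IsHighest.mem_span_Itil (hh : B.IsHighest h) {γ : V} (hγ : B.IsPos γ)
    (h0 : ⟪h, γ⟫ = 0) : γ ∈ Submodule.span ℝ (B.Itil h : Set V) := by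
  have hterm_nonneg : ∀ a ∈ B.Δ, 0 ≤ (B.coeff γ a : ℝ) * ⟪h, a⟫ := fun a ha =>
    mul_nonneg (by exact_mod_cast hγ.2 a ha) (hh.inner_nonneg_of_mem_Δ ha)
  have hsum : ∑ a ∈ B.Δ, (B.coeff γ a : ℝ) * ⟪h, a⟫ = 0 := by
    conv_rhs => rw [← h0, B.coeff_spec γ hγ.1, inner_sum]
    simp only [real_inner_smul_right]
  rw [B.coeff_spec γ hγ.1]
  refine Submodule.sum_mem _ fun a ha => ?_
  rcases mul_eq_zero.mp ((Finset.sum_eq_zero_iff_of_nonneg hterm_nonneg).mp hsum a ha)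
    with hc | hi
  · rw [hc, zero_smul]
    exact Submodule.zero_mem _
  · exact Submodule.smul_mem _ _ (Submodule.subset_span (by simp [Itil, ha, hi]))

theorem inner_eq_zero_of_mem_span_Itil {γ : V}
    (hγ : γ ∈ Submodule.span ℝ (B.Itil h : Set V)) : ⟪h, γ⟫ = 0 := by
  induction hγ using Submodule.span_induction with
  | mem x hx => exact (Finset.mem_filter.mp hx).2
  | zero => exact inner_zero_right h
  | add x y _ _ hx hy => rw [inner_add_right, hx, hy, add_zero]
  | smul c x _ hx => rw [real_inner_smul_right, hx, mul_zero]

theorem one_le_ht {γ : V} (hγ : B.IsPos γ) : 1 ≤ B.ht γ := by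
  by_contra! hcon
  have hzero := (Finset.sum_eq_zero_iff_of_nonneg hγ.2).mp
    (le_antisymm (Int.lt_add_one_iff.mp hcon) (Finset.sum_nonneg hγ.2))
  exact hγ.not_isNeg ⟨hγ.1, fun a ha => (hzero a ha).le⟩

theorem ht_sref_apply {a γ : V} (ha : a ∈ B.Δ) (hγ : γ ∈ R.Φ) {n : ℤ}
    (hform : sref a γ = γ - (n : ℝ) • a) : B.ht (sref a γ) = B.ht γ - n := by
  have hmem : γ - (n : ℝ) • a ∈ R.Φ := hform ▸ R.reflect_mem a (B.subset ha) γ hγ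
  simp only [ht, hform, Finset.sum_congr rfl fun b hb => coeff_sub_zsmul hγ (B.subset ha) hmem hb,
    Finset.sum_sub_distrib, ← Finset.mul_sum, Finset.sum_congr rfl fun b hb => coeff_of_mem_Δ ha hb,
    Finset.sum_ite_eq', ha, if_true, mul_one]

theorem exists_inner_pos_of_isPos {γ : V} (hγ : B.IsPos γ) : ∃ a ∈ B.Δ, 0 < ⟪γ, a⟫ := by
  by_contra! hcon
  have : ⟪γ, γ⟫ ≤ 0 := by
    nth_rewrite 2 [B.coeff_spec γ hγ.1]
    rw [inner_sum]
    refine Finset.sum_nonpos fun a ha => ?_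
    rw [real_inner_smul_right]
    exact mul_nonpos_of_nonneg_of_nonpos (by exact_mod_cast hγ.2 a ha) (hcon a ha)
  linarith [inner_self_pos_of_mem hγ.1]

theorem exists_mem_WeylP_apply_mem_Δ {γ : V} (hγ : B.IsPos γ) :
    ∃ w ∈ WeylP B.Δ, w γ ∈ B.Δ := by
  induction hk : (B.ht γ).toNat using Nat.strong_induction_on generalizing γ with
  | _ k ih =>
    by_cases hmem : γ ∈ B.Δ
    · exact ⟨1, one_mem _, hmem⟩
    obtain ⟨a, ha, hpos⟩ := exists_inner_pos_of_isPos hγ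
    obtain ⟨n, hpair, hform⟩ := exists_sref_apply_eq_sub_zsmul (B.subset ha) hγ.1
    have hn : 0 < n := by
      have : (0 : ℝ) < n := hpair ▸ div_pos (by rw [real_inner_comm]; linarith)
        (inner_self_pos_of_mem (B.subset ha))
      exact_mod_cast this
    have hδ : B.IsPos (sref a γ) := isPos_sref_apply_of_ne ha hγ (by rintro rfl; exact hmem ha)
    have hlt : (B.ht (sref a γ)).toNat < k := by
      have := ht_sref_apply ha hγ.1 hform
      have := one_le_ht hδ
      omega
    obtain ⟨w, hw, hwδ⟩ := ih _ hlt hδ rfl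
    exact ⟨w * sref a, mul_mem hw (Subgroup.subset_closure ⟨a, ha, rfl⟩), hwδ⟩

theorem sref_mem_WeylP {γ : V} (hγ : γ ∈ R.Φ) : sref γ ∈ WeylP B.Δ := by
  suffices ∀ δ : V, B.IsPos δ → sref δ ∈ WeylP B.Δ by
    rcases B.isPos_or_isNeg hγ with hp | hn
    · exact this γ hp
    · simpa [sref_neg] using this (-γ) hn.neg
  intro δ hδ
  obtain ⟨w, hw, hwδ⟩ := exists_mem_WeylP_apply_mem_Δ hδ
  have hconj : sref δ = w⁻¹ * sref (w δ) * w := by rw [sref_map]; group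
  rw [hconj]
  exact mul_mem (mul_mem (inv_mem hw) (Subgroup.subset_closure ⟨w δ, hwδ, rfl⟩)) hw

theorem WeylP_Δ_le_Weyl : WeylP B.Δ ≤ R.Weyl :=
  Subgroup.closure_mono (Set.image_mono (by exact_mod_cast B.subset))

theorem Weyl_eq_WeylP_Δ : R.Weyl = WeylP B.Δ := by
  refine le_antisymm ?_ WeylP_Δ_le_Weyl
  rw [NRootSystem.Weyl, Subgroup.closure_le]
  rintro _ ⟨γ, hγ, rfl⟩
  exact sref_mem_WeylP hγ

variable (B) in
def IsWord (L : List V) (w : V ≃ₗᵢ[ℝ] V) : Prop :=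
  (∀ a ∈ L, a ∈ B.Δ) ∧ w = (L.map sref).prod

theorem isWord_nil : B.IsWord [] 1 := ⟨by simp, rfl⟩

theorem IsWord.cons {L : List V} {w : V ≃ₗᵢ[ℝ] V} (hL : B.IsWord L w) {a : V} (ha : a ∈ B.Δ) :
    B.IsWord (a :: L) (sref a * w) :=
  ⟨List.forall_mem_cons.mpr ⟨ha, hL.1⟩, by rw [hL.2, List.map_cons, List.prod_cons]⟩

theorem IsWord.mul {L M : List V} {u v : V ≃ₗᵢ[ℝ] V} (hL : B.IsWord L u) (hM : B.IsWord M v) :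
    B.IsWord (L ++ M) (u * v) :=
  ⟨fun a ha => (List.mem_append.mp ha).elim (hL.1 a) (hM.1 a),
    by rw [hL.2, hM.2, List.map_append, List.prod_append]⟩

theorem exists_isWord {w : V ≃ₗᵢ[ℝ] V} (hw : w ∈ R.Weyl) : ∃ L, B.IsWord L w := by
  rw [Weyl_eq_WeylP_Δ (B := B)] at hw
  induction hw using Subgroup.closure_induction'' with
  | one => exact ⟨[], isWord_nil⟩
  | mem u hu => obtain ⟨a, ha, rfl⟩ := hu; exact ⟨[a], by simpa using isWord_nil.cons ha⟩
  | inv_mem u hu =>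
    obtain ⟨a, ha, rfl⟩ := hu
    exact ⟨[a], by simpa [sref_inv] using isWord_nil.cons ha⟩
  | mul u v _ _ hu hv =>
    obtain ⟨L, hL⟩ := hu
    obtain ⟨M, hM⟩ := hv
    exact ⟨L ++ M, hL.mul hM⟩

theorem IsWord.mem_Weyl {L : List V} {w : V ≃ₗᵢ[ℝ] V} (hL : B.IsWord L w) : w ∈ R.Weyl := by
  obtain ⟨hmem, rfl⟩ := hL
  induction L with
  | nil => exact one_mem _
  | cons a M ih =>
    rw [List.map_cons, List.prod_cons]
    exact mul_mem (sref_mem_Weyl (B.subset (hmem a List.mem_cons_self)))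
      (ih fun b hb => hmem b (List.mem_cons_of_mem a hb))

theorem IsWord.exists_fin {L : List V} {w : V ≃ₗᵢ[ℝ] V} (hL : B.IsWord L w) :
    ∃ g : Fin L.length → V, (∀ i, g i ∈ B.Δ) ∧ w = (List.ofFn fun i => sref (g i)).prod :=
  ⟨L.get, fun i => hL.1 _ (L.get_mem i), by
    simp [hL.2, List.ofFn_getElem_eq_map]⟩

theorem IsWord.len_le {L : List V} {w : V ≃ₗᵢ[ℝ] V} (hL : B.IsWord L w) : B.len w ≤ L.length :=
  Nat.sInf_le hL.exists_fin

theorem exists_isWord_length_eq_len {w : V ≃ₗᵢ[ℝ] V} (hw : w ∈ R.Weyl) :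
    ∃ L, B.IsWord L w ∧ L.length = B.len w := by
  obtain ⟨L, hL⟩ := exists_isWord (B := B) hw
  obtain ⟨g, hg, hwg⟩ : ∃ g : Fin (B.len w) → V,
      (∀ i, g i ∈ B.Δ) ∧ w = (List.ofFn fun i => sref (g i)).prod :=
    Nat.sInf_mem (s := {n | ∃ g : Fin n → V,
      (∀ i, g i ∈ B.Δ) ∧ w = (List.ofFn fun i => sref (g i)).prod}) ⟨L.length, hL.exists_fin⟩
  refine ⟨List.ofFn g, ⟨fun a ha => ?_, by
    rwa [List.map_ofFn]⟩, List.length_ofFn⟩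
  obtain ⟨i, rfl⟩ := List.mem_ofFn.mp ha
  exact hg i

theorem eq_one_of_len_eq_zero {w : V ≃ₗᵢ[ℝ] V} (hw : w ∈ R.Weyl) (h : B.len w = 0) : w = 1 := by
  obtain ⟨L, hL, hlen⟩ := exists_isWord_length_eq_len (B := B) hw
  rw [hL.2, List.length_eq_zero_iff.mp (hlen.trans h), List.map_nil, List.prod_nil]

variable (B) in
noncomputable def inversions (w : V ≃ₗᵢ[ℝ] V) : Finset V :=
  R.Φ.filter fun γ => B.IsPos γ ∧ B.IsNeg (w γ)

theorem mem_inversions {w : V ≃ₗᵢ[ℝ] V} {γ : V} :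
    γ ∈ B.inversions w ↔ B.IsPos γ ∧ B.IsNeg (w γ) :=
  Finset.mem_filter.trans (and_iff_right_of_imp fun h => h.1.1)

theorem inversions_eq_empty {w : V ≃ₗᵢ[ℝ] V} (h : ∀ γ ∈ R.Φ, B.IsPos γ → B.IsPos (w γ)) :
    B.inversions w = ∅ :=
  Finset.eq_empty_of_forall_notMem fun γ hγ =>
    have ⟨hpos, hneg⟩ := mem_inversions.mp hγ
    (h γ hpos.1 hpos).not_isNeg hneg

theorem inversions_mul {u v : V ≃ₗᵢ[ℝ] V} (hu : u ∈ R.Weyl) (hv : v ∈ R.Weyl)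
    (h : ∀ δ ∈ B.inversions u, B.IsPos (v⁻¹ δ)) :
    B.inversions (u * v) = B.inversions v ∪ (B.inversions u).image ⇑v⁻¹ := by
  ext γ
  simp only [Finset.mem_union, Finset.mem_image, mem_inversions, mul_apply]
  constructor
  · rintro ⟨hγ, huvγ⟩
    refine (B.isPos_or_isNeg (apply_mem_of_mem_Weyl hv hγ.1)).symm.imp (⟨hγ, ·⟩) fun hvγ => ?_
    exact ⟨v γ, ⟨hvγ, huvγ⟩, inv_apply_self v γ⟩
  · rintro (⟨hγ, hvγ⟩ | ⟨δ, hδ, rfl⟩)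
    · refine ⟨hγ, (B.isPos_or_isNeg (apply_mem_of_mem_Weyl hu hvγ.1)).resolve_left fun huvγ => ?_⟩
      have := h _ (mem_inversions.mpr ⟨hvγ.neg, by simpa using huvγ.neg⟩)
      rw [map_neg, inv_apply_self] at this
      exact hγ.not_isNeg (by simpa using this.neg)
    · exact ⟨h δ (mem_inversions.mpr hδ), by rw [apply_inv_self]; exact hδ.2⟩

theorem card_inversions_mul {u v : V ≃ₗᵢ[ℝ] V} (hu : u ∈ R.Weyl) (hv : v ∈ R.Weyl)
    (h : ∀ δ ∈ B.inversions u, B.IsPos (v⁻¹ δ)) :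
    (B.inversions (u * v)).card = (B.inversions u).card + (B.inversions v).card := by
  have hdisj : Disjoint (B.inversions v) ((B.inversions u).image ⇑v⁻¹) := by
    refine Finset.disjoint_left.mpr fun γ hγ hγ' => ?_
    obtain ⟨δ, hδ, rfl⟩ := Finset.mem_image.mp hγ'
    rw [mem_inversions, apply_inv_self] at hγ
    exact (mem_inversions.mp hδ).1.not_isNeg hγ.2
  rw [inversions_mul hu hv h, Finset.card_union_of_disjoint hdisj,
    Finset.card_image_of_injective _ v⁻¹.injective, add_comm]

theorem inversions_sref_of_mem_Δ {a : V} (ha : a ∈ B.Δ) : B.inversions (sref a) = {a} := by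
  ext γ
  rw [mem_inversions, Finset.mem_singleton]
  constructor
  · rintro ⟨hγ, hneg⟩
    by_contra hne
    exact (isPos_sref_apply_of_ne ha hγ hne).not_isNeg hneg
  · rintro rfl
    exact ⟨isPos_of_mem_Δ ha, by rw [sref_self]; exact (isPos_of_mem_Δ ha).neg⟩

theorem card_inversions_mul_sref {u : V ≃ₗᵢ[ℝ] V} (hu : u ∈ R.Weyl) {a : V} (ha : a ∈ B.Δ)
    (hpos : B.IsPos (u a)) :
    (B.inversions (u * sref a)).card = (B.inversions u).card + 1 := by
  rw [card_inversions_mul hu (sref_mem_Weyl (B.subset ha)), inversions_sref_of_mem_Δ ha,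
    Finset.card_singleton]
  intro δ hδ
  rw [mem_inversions] at hδ
  rw [sref_inv]
  exact isPos_sref_apply_of_ne ha hδ.1 (by rintro rfl; exact hpos.not_isNeg hδ.2)

theorem IsWord.exists_isWord_mul_sref {L : List V} {w : V ≃ₗᵢ[ℝ] V} (hL : B.IsWord L w)
    {a : V} (ha : a ∈ B.Δ) (hneg : B.IsNeg (w a)) :
    ∃ M, B.IsWord M (w * sref a) ∧ M.length + 1 = L.length := by
  induction L generalizing w with
  | nil => exact absurd (by simpa [hL.2] using hneg) (isPos_of_mem_Δ ha).not_isNeg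
  | cons b L ih =>
    have hb : b ∈ B.Δ := hL.1 b List.mem_cons_self
    have hL' : B.IsWord L (L.map sref).prod := ⟨fun c hc => hL.1 c (List.mem_cons_of_mem b hc), rfl⟩
    set u := (L.map sref).prod
    have hw : w = sref b * u := by rw [hL.2, List.map_cons, List.prod_cons]
    rcases B.isPos_or_isNeg (apply_mem_of_mem_Weyl hL'.mem_Weyl (B.subset ha)) with hpos | hneg'
    · -- `s_b` makes `u a` negative, so `u a = b` and `s_b = u s_a u⁻¹`
      have hub : u a = b := by
        by_contra hne
        exact (isPos_sref_apply_of_ne hb hpos hne).not_isNeg (by rwa [hw] at hneg)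
      refine ⟨L, ?_, rfl⟩
      rwa [hw, ← hub, sref_map, inv_mul_cancel_right, mul_assoc, sref_mul_self, mul_one]
    · obtain ⟨M, hM, hlen⟩ := ih hL' hneg'
      refine ⟨b :: M, ?_, by simp [← hlen]⟩
      rw [hw, mul_assoc]
      exact hM.cons hb

theorem len_mul_sref_lt {w : V ≃ₗᵢ[ℝ] V} (hw : w ∈ R.Weyl) {a : V} (ha : a ∈ B.Δ)
    (hneg : B.IsNeg (w a)) : B.len (w * sref a) < B.len w := by
  obtain ⟨L, hL, hlen⟩ := exists_isWord_length_eq_len (B := B) hw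
  obtain ⟨M, hM, hMlen⟩ := hL.exists_isWord_mul_sref ha hneg
  have := hM.len_le
  omega

theorem len_mul_sref_le {w : V ≃ₗᵢ[ℝ] V} (hw : w ∈ R.Weyl) {a : V} (ha : a ∈ B.Δ) :
    B.len (w * sref a) ≤ B.len w + 1 := by
  obtain ⟨L, hL, hlen⟩ := exists_isWord_length_eq_len (B := B) hw
  have := (hL.mul (isWord_nil.cons ha)).len_le
  simpa [hlen] using this

theorem len_eq_card_inversions {w : V ≃ₗᵢ[ℝ] V} (hw : w ∈ R.Weyl) :
    B.len w = (B.inversions w).card := by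
  induction hk : B.len w generalizing w with
  | zero =>
    rw [eq_one_of_len_eq_zero hw hk, inversions_eq_empty fun γ _ hγ => hγ, Finset.card_empty]
  | succ k ih =>
    obtain ⟨L, hL, hlen⟩ := exists_isWord_length_eq_len (B := B) hw
    obtain ⟨M, a, rfl⟩ := (List.eq_nil_or_concat L).resolve_left (by rintro rfl; simp_all)
    have ha : a ∈ B.Δ := hL.1 a (by simp)
    have hM : B.IsWord M (M.map sref).prod := ⟨fun b hb => hL.1 b (by simp [hb]), rfl⟩
    set u := (M.map sref).prod
    have hu : u ∈ R.Weyl := hM.mem_Weyl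
    have hwu : w = u * sref a := by simp [hL.2, u]
    have hMlen : M.length = k := by simpa [hk] using hlen
    -- the last letter of a reduced word lengthens the prefix
    have hpos : B.IsPos (u a) := by
      refine (B.isPos_or_isNeg (apply_mem_of_mem_Weyl hu (B.subset ha))).resolve_right
        fun hneg => ?_
      have hlt := len_mul_sref_lt hu ha hneg
      rw [← hwu] at hlt
      have := hM.len_le
      omega
    have hlenu : B.len u = k := by
      have := hM.len_le
      have := len_mul_sref_le hu ha
      rw [← hwu] at this
      omega
    rw [hwu, card_inversions_mul_sref hu ha hpos, ← ih hu hlenu]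

theorem eq_one_of_forall_isPos {w : V ≃ₗᵢ[ℝ] V} (hw : w ∈ R.Weyl)
    (h : ∀ γ ∈ R.Φ, B.IsPos γ → B.IsPos (w γ)) : w = 1 := by
  refine eq_one_of_len_eq_zero (B := B) hw ?_
  rw [len_eq_card_inversions hw, inversions_eq_empty h, Finset.card_empty]

theorem IsHighest.isPos_apply_of_mem_XI (hh : B.IsHighest h) {y : V ≃ₗᵢ[ℝ] V}
    (hy : y ∈ B.XI (B.Itil h)) {γ : V} (hγ : B.IsPos γ) (h0 : ⟪h, γ⟫ = 0) : B.IsPos (y γ) :=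
  hy.2 γ hγ.1 (hh.mem_span_Itil hγ h0) hγ

theorem sref_mul_mem_XI {x : V ≃ₗᵢ[ℝ] V} (hx : x ∈ B.XI (B.Itil h)) {α : V} (hα : α ∈ R.Φ)
    (hxα : x h = α) : sref α * x ∈ B.XI (B.Itil h) := by
  refine ⟨mul_mem (sref_mem_Weyl hα) hx.1, fun γ hγ hspan hpos => ?_⟩
  have h0 : ⟪α, x γ⟫ = 0 := by
    rw [← hxα, x.inner_map_map, inner_eq_zero_of_mem_span_Itil hspan]
  rw [mul_apply, sref_apply_of_inner_eq_zero h0]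
  exact hx.2 γ hγ hspan hpos

theorem IsHighest.eq_of_mem_XI (hh : B.IsHighest h) {y y' : V ≃ₗᵢ[ℝ] V}
    (hy : y ∈ B.XI (B.Itil h)) (hy' : y' ∈ B.XI (B.Itil h)) (hyy' : y h = y' h) : y = y' := by
  set w := y⁻¹ * y'
  have hw : w ∈ R.Weyl := mul_mem (inv_mem hy.1) hy'.1
  have hwh : w h = h := by rw [mul_apply, ← hyy', inv_apply_self]
  suffices w = 1 from (inv_mul_eq_one.mp this)
  refine eq_one_of_forall_isPos hw fun γ hγ hpos =>
    (B.isPos_or_isNeg (apply_mem_of_mem_Weyl hw hγ)).resolve_right fun hneg => ?_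
  have hinner : ⟪h, w γ⟫ = ⟪h, γ⟫ := by rw [← w.inner_map_map h γ, hwh]
  have h0 : ⟪h, γ⟫ = 0 := le_antisymm (hinner ▸ hh.inner_nonpos hneg) (hh.inner_nonneg hpos)
  have h0' : ⟪h, -w γ⟫ = 0 := by rw [inner_neg_right, hinner, h0, neg_zero]
  have hy'γ : B.IsPos (y' γ) := hh.isPos_apply_of_mem_XI hy' hpos h0
  have hywγ : B.IsPos (y (-w γ)) := hh.isPos_apply_of_mem_XI hy hneg.neg h0'
  rw [map_neg, mul_apply, apply_inv_self] at hywγ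
  exact hy'γ.not_isNeg (by simpa using hywγ.neg)

theorem IsHighest.len_sref_mul (hh : B.IsHighest h) {α : V} (hα : B.IsPos α)
    {x : V ≃ₗᵢ[ℝ] V} (hx : x ∈ R.Weyl) (hxα : x h = α) :
    B.len (sref α * x) = B.len (sref α) + B.len x := by
  have hs : sref α ∈ R.Weyl := sref_mem_Weyl hα.1
  rw [len_eq_card_inversions (mul_mem hs hx), len_eq_card_inversions hs, len_eq_card_inversions hx]
  refine card_inversions_mul hs hx fun δ hδ => ?_
  obtain ⟨hδpos, hδneg⟩ := mem_inversions.mp hδ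
  have hinner : 0 < ⟪h, x⁻¹ δ⟫ := by
    rw [← x.inner_map_map, apply_inv_self, hxα, real_inner_comm]
    exact inner_pos_of_isNeg_sref_apply hα hδpos hδneg
  exact (B.isPos_or_isNeg (apply_mem_of_mem_Weyl (inv_mem hx) hδpos.1)).resolve_right
    fun hn => (hh.inner_nonpos hn).not_gt hinner

end Base

theorem x_neg_eq_sref_mul_x_general (R : NRootSystem V) (B : Base R) {h : V}
    (hh : B.IsHighest h) {α : V} (hαpos : B.IsPos α)
    {x xm : V ≃ₗᵢ[ℝ] V} (hx : x ∈ B.XI (B.Itil h)) (hxα : x h = α)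
    (hxm : xm ∈ B.XI (B.Itil h)) (hxmα : xm h = -α) :
    xm = sref α * x ∧ B.len xm = B.len (sref α) + B.len x := by
  have hxm_eq : xm = sref α * x :=
    hh.eq_of_mem_XI hxm (Base.sref_mul_mem_XI hx hαpos.1 hxα)
      (by rw [mul_apply, hxα, sref_self, hxmα])
  exact ⟨hxm_eq, hxm_eq ▸ hh.len_sref_mul hαpos hx.1 hxα⟩

/-- for every positive long root `α`, one has `x_{−α} = s_α x_α`, and the
lengths add: `l(x_{−α}) = l(s_α x_α) = l(s_α) + l(x_α)`. Here `x_α` (resp. `x_{−α}`)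
is the unique element of `X_Ĩ` taking the highest root `α̃` to `α` (resp. `−α`). -/
theorem x_neg_eq_sref_mul_x (R : NRootSystem V) (B : Base R) {h : V}
    (hh : B.IsHighest h) {α : V} (hα : R.IsLong α) (hαpos : B.IsPos α)
    {x xm : V ≃ₗᵢ[ℝ] V} (hx : x ∈ B.XI (B.Itil h)) (hxα : x h = α)
    (hxm : xm ∈ B.XI (B.Itil h)) (hxmα : xm h = -α) :
    xm = sref α * x ∧ B.len xm = B.len (sref α) + B.len x :=
  x_neg_eq_sref_mul_x_general R B hh hαpos hx hxα hxm hxmα
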